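/- Every real number λ is a continuum eigenvalue of the operator M = i·d/dx on L²(ℝ): there exists a sequence of nonzero smooth square-integrable functions y_n : ℝ → ℂ (with square-integrable derivatives) such that ‖i·y_n′ - λ·y_n‖_{L²(ℝ)} / ‖y_n‖_{L²(ℝ)} → 0 as n → ∞. -/

import Mathlib

open Complex MeasureTheory Filter Real

noncomputable def yfun (lam ε : ℝ) (x : ℝ) : ℂ :=
  Complex.exp (-(Complex.I * lam) * x - ε * x ^ 2)

lemma yfun_hasDerivAt (lam ε : ℝ) (x : ℝ) :
    HasDerivAt (yfun lam ε) ((-(Complex.I * lam) - 2 * ε * x) * yfun lam ε x) x := by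
  have h1 : HasDerivAt (fun z : ℂ => -(Complex.I * lam) * z - ε * z ^ 2)
      (-(Complex.I * lam) - ε * (2 * (x:ℂ))) (x : ℂ) := by
    have := ((hasDerivAt_id (x:ℂ)).const_mul (-(Complex.I * lam))).sub
      (((hasDerivAt_pow 2 (x:ℂ))).const_mul (ε:ℂ))
    exact this.congr_deriv (by norm_num)
  have h2 := (h1.cexp).comp_ofReal
  convert h2 using 1
  all_goals (unfold yfun; ring)

lemma yfun_norm (lam ε : ℝ) (x : ℝ) :
    ‖yfun lam ε x‖ = Real.exp (-(ε * x ^ 2)) := by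
  unfold yfun
  rw [Complex.norm_exp]
  norm_num [Complex.add_re, Complex.mul_re]
  left
  norm_cast

lemma yfun_contDiff (lam ε : ℝ) : ContDiff ℝ (⊤ : ℕ∞) (yfun lam ε) := by
  have h1 : ContDiff ℝ (⊤ : ℕ∞) (fun x : ℝ => -(Complex.I * lam) * x - ε * (x:ℂ) ^ 2) := by
    apply ContDiff.sub
    · exact contDiff_const.mul Complex.ofRealCLM.contDiff
    · exact contDiff_const.mul (Complex.ofRealCLM.contDiff.pow 2)
  exact ((contDiff_exp (𝕜 := ℂ)).restrict_scalars ℝ).comp h1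

lemma yfun_ne_zero (lam ε : ℝ) : yfun lam ε ≠ 0 := by
  intro h
  have := congrFun h 0
  simp [yfun, Complex.exp_ne_zero] at this

lemma yfun_deriv (lam ε : ℝ) (x : ℝ) :
    deriv (yfun lam ε) x = (-(Complex.I * lam) - 2 * ε * x) * yfun lam ε x :=
  (yfun_hasDerivAt lam ε x).deriv

lemma yfun_num_norm (lam ε : ℝ) (x : ℝ) :
    ‖Complex.I * deriv (yfun lam ε) x - (lam : ℂ) * yfun lam ε x‖ ^ 2
      = 4 * ε ^ 2 * x ^ 2 * Real.exp (-(2 * ε) * x ^ 2) := by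
  rw [yfun_deriv]
  have h1 : Complex.I * ((-(Complex.I * lam) - 2 * ε * x) * yfun lam ε x)
      - (lam : ℂ) * yfun lam ε x = (-(2 * ε * x) * Complex.I) * yfun lam ε x := by
    have := Complex.I_sq
    ring_nf
    rw [Complex.I_sq]
    ring
  rw [h1, norm_mul, norm_mul, Complex.norm_I, mul_one, yfun_norm]
  have h2 : (-(2 * (ε:ℂ) * x)) = ((-(2 * ε * x) : ℝ) : ℂ) := by push_cast; ring
  rw [mul_pow, h2, Complex.norm_real, Real.norm_eq_abs, _root_.sq_abs, ← Real.exp_nat_mul]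
  ring_nf

lemma yfun_norm_sq (lam ε : ℝ) (x : ℝ) :
    ‖yfun lam ε x‖ ^ 2 = Real.exp (-(2 * ε) * x ^ 2) := by
  rw [yfun_norm, ← Real.exp_nat_mul]
  ring_nf

lemma integrable_sq_gauss {b : ℝ} (hb : 0 < b) :
    Integrable (fun x : ℝ => x ^ 2 * Real.exp (-b * x ^ 2)) := by
  have := integrable_rpow_mul_exp_neg_mul_sq hb (s := 2) (by norm_num)
  apply this.congr
  filter_upwards with x
  rw [show ((2:ℝ) = ((2:ℕ):ℝ)) by norm_num, Real.rpow_natCast]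

lemma yfun_memLp (lam ε : ℝ) (hε : 0 < ε) : MemLp (yfun lam ε) 2 volume := by
  rw [memLp_two_iff_integrable_sq_norm ((yfun_contDiff lam ε).continuous.aestronglyMeasurable)]
  apply (integrable_exp_neg_mul_sq (by linarith : (0:ℝ) < 2 * ε)).congr
  filter_upwards with x
  rw [yfun_norm_sq]

lemma yfun_deriv_memLp (lam ε : ℝ) (hε : 0 < ε) : MemLp (deriv (yfun lam ε)) 2 volume := by
  have hmeas : AEStronglyMeasurable (deriv (yfun lam ε)) volume := by
    exact ((yfun_contDiff lam ε).continuous_deriv (by simp)).aestronglyMeasurable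
  rw [memLp_two_iff_integrable_sq_norm hmeas]
  have hInt : Integrable (fun x : ℝ =>
      lam ^ 2 * Real.exp (-(2 * ε) * x ^ 2)
        + 4 * ε ^ 2 * (x ^ 2 * Real.exp (-(2 * ε) * x ^ 2))) := by
    exact ((integrable_exp_neg_mul_sq (by linarith : (0:ℝ) < 2 * ε)).const_mul (lam ^ 2)).add
      ((integrable_sq_gauss (by linarith : (0:ℝ) < 2 * ε)).const_mul (4 * ε ^ 2))
  apply hInt.congr
  filter_upwards with x
  rw [yfun_deriv, norm_mul, mul_pow, yfun_norm_sq]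
  have : ‖-(Complex.I * lam) - 2 * ε * x‖ ^ 2 = lam ^ 2 + 4 * ε ^ 2 * x ^ 2 := by
    rw [Complex.sq_norm, Complex.normSq_apply]
    simp
    ring
  rw [this]
  ring

lemma mul_exp_neg_le (t : ℝ) : t * Real.exp (-t) ≤ Real.exp (-1) := by
  have h1 : t ≤ Real.exp (t - 1) := by
    have := Real.add_one_le_exp (t - 1)
    linarith
  calc t * Real.exp (-t) ≤ Real.exp (t - 1) * Real.exp (-t) :=
        mul_le_mul_of_nonneg_right h1 (Real.exp_pos _).le
    _ = Real.exp (-1) := by rw [← Real.exp_add]; ring_nf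

theorem stmt_10 (lam : ℝ) :
    ∃ y : ℕ → ℝ → ℂ,
      (∀ n, ContDiff ℝ (⊤ : ℕ∞) (y n)) ∧
      (∀ n, y n ≠ 0) ∧
      (∀ n, MemLp (y n) 2 volume) ∧
      (∀ n, MemLp (deriv (y n)) 2 volume) ∧
      Tendsto (fun n : ℕ =>
        Real.sqrt (∫ x : ℝ, ‖Complex.I * deriv (y n) x - (lam : ℂ) * y n x‖ ^ 2) /
        Real.sqrt (∫ x : ℝ, ‖y n x‖ ^ 2)) atTop (nhds 0) := by
  refine ⟨fun n => yfun lam (1 / ((n:ℝ) + 1)), fun n => yfun_contDiff _ _,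
    fun n => yfun_ne_zero _ _, fun n => yfun_memLp _ _ (by positivity),
    fun n => yfun_deriv_memLp _ _ (by positivity), ?_⟩
  set C : ℝ := 4 * Real.sqrt 2 / Real.exp 1 with hC
  have hC0 : 0 ≤ C := by positivity
  have hupper : ∀ n : ℕ,
      Real.sqrt (∫ x : ℝ, ‖Complex.I * deriv (yfun lam (1 / ((n:ℝ) + 1))) x
          - (lam : ℂ) * yfun lam (1 / ((n:ℝ) + 1)) x‖ ^ 2) /
        Real.sqrt (∫ x : ℝ, ‖yfun lam (1 / ((n:ℝ) + 1)) x‖ ^ 2)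
      ≤ Real.sqrt (C * (1 / ((n:ℝ) + 1))) := by
    intro n
    set ε : ℝ := 1 / ((n:ℝ) + 1) with hεdef
    have hε : 0 < ε := by positivity
    have h2ε : (0:ℝ) < 2 * ε := by linarith
    set N : ℝ := ∫ x : ℝ, ‖Complex.I * deriv (yfun lam ε) x - (lam : ℂ) * yfun lam ε x‖ ^ 2
      with hNdef
    set D : ℝ := ∫ x : ℝ, ‖yfun lam ε x‖ ^ 2 with hDdef
    have hD : D = Real.sqrt (π / (2 * ε)) := by
      rw [hDdef]
      simp only [yfun_norm_sq]
      exact integral_gaussian (2 * ε)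
    have hDpos : 0 < D := by
      rw [hD]
      apply Real.sqrt_pos.mpr
      positivity
    have hN0 : 0 ≤ N := by
      rw [hNdef]
      exact integral_nonneg fun x => by positivity
    -- bound on N
    have hfInt : Integrable (fun x : ℝ => 4 * ε ^ 2 * x ^ 2 * Real.exp (-(2 * ε) * x ^ 2)) := by
      apply ((integrable_sq_gauss h2ε).const_mul (4 * ε ^ 2)).congr
      filter_upwards with x
      ring
    have hgInt : Integrable (fun x : ℝ => 4 * ε / Real.exp 1 * Real.exp (-ε * x ^ 2)) :=
      (integrable_exp_neg_mul_sq hε).const_mul _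
    have hptwise : ∀ x : ℝ, 4 * ε ^ 2 * x ^ 2 * Real.exp (-(2 * ε) * x ^ 2)
        ≤ 4 * ε / Real.exp 1 * Real.exp (-ε * x ^ 2) := by
      intro x
      have key := mul_exp_neg_le (ε * x ^ 2)
      have hsplit : Real.exp (-(2 * ε) * x ^ 2)
          = Real.exp (-(ε * x ^ 2)) * Real.exp (-ε * x ^ 2) := by
        rw [← Real.exp_add]; ring_nf
      rw [hsplit]
      have h4ε : (0:ℝ) ≤ 4 * ε := by linarith
      have hE : (0:ℝ) ≤ Real.exp (-ε * x ^ 2) := (Real.exp_pos _).le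
      calc 4 * ε ^ 2 * x ^ 2 * (Real.exp (-(ε * x ^ 2)) * Real.exp (-ε * x ^ 2))
          = 4 * ε * (ε * x ^ 2 * Real.exp (-(ε * x ^ 2))) * Real.exp (-ε * x ^ 2) := by ring
        _ ≤ 4 * ε * Real.exp (-1) * Real.exp (-ε * x ^ 2) := by
            apply mul_le_mul_of_nonneg_right _ hE
            exact mul_le_mul_of_nonneg_left key h4ε
        _ = 4 * ε / Real.exp 1 * Real.exp (-ε * x ^ 2) := by
            rw [Real.exp_neg]; ring
    have hNle : N ≤ 4 * ε / Real.exp 1 * Real.sqrt (π / ε) := by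
      have h1 : N = ∫ x : ℝ, 4 * ε ^ 2 * x ^ 2 * Real.exp (-(2 * ε) * x ^ 2) := by
        rw [hNdef]
        simp only [yfun_num_norm]
      have h2 : (∫ x : ℝ, 4 * ε ^ 2 * x ^ 2 * Real.exp (-(2 * ε) * x ^ 2))
          ≤ ∫ x : ℝ, 4 * ε / Real.exp 1 * Real.exp (-ε * x ^ 2) :=
        integral_mono hfInt hgInt hptwise
      have h3 : (∫ x : ℝ, 4 * ε / Real.exp 1 * Real.exp (-ε * x ^ 2))
          = 4 * ε / Real.exp 1 * Real.sqrt (π / ε) := by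
        rw [integral_const_mul, integral_gaussian]
      rw [h1]
      rw [h3] at h2
      exact h2
    -- final
    have hbound : 4 * ε / Real.exp 1 * Real.sqrt (π / ε) / D = C * ε := by
      have hsq : Real.sqrt (π / ε) = Real.sqrt 2 * Real.sqrt (π / (2 * ε)) := by
        rw [← Real.sqrt_mul (by norm_num : (0:ℝ) ≤ 2)]
        congr 1
        field_simp
      rw [hD, hsq, hC]
      have hs : Real.sqrt (π / (2 * ε)) ≠ 0 := by
        apply ne_of_gt
        apply Real.sqrt_pos.mpr
        positivity
      field_simp
    have : N / D ≤ C * ε := by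
      rw [← hbound]
      exact div_le_div_of_nonneg_right hNle hDpos.le |>.trans_eq rfl
    calc Real.sqrt N / Real.sqrt D = Real.sqrt (N / D) := (Real.sqrt_div hN0 D).symm
      _ ≤ Real.sqrt (C * ε) := Real.sqrt_le_sqrt this
  have hlower : ∀ n : ℕ, (0:ℝ) ≤
      Real.sqrt (∫ x : ℝ, ‖Complex.I * deriv (yfun lam (1 / ((n:ℝ) + 1))) x
          - (lam : ℂ) * yfun lam (1 / ((n:ℝ) + 1)) x‖ ^ 2) /
        Real.sqrt (∫ x : ℝ, ‖yfun lam (1 / ((n:ℝ) + 1)) x‖ ^ 2) :=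
    fun n => div_nonneg (Real.sqrt_nonneg _) (Real.sqrt_nonneg _)
  have htop : Tendsto (fun n : ℕ => Real.sqrt (C * (1 / ((n:ℝ) + 1)))) atTop (nhds 0) := by
    have h1 : Tendsto (fun n : ℕ => C * (1 / ((n:ℝ) + 1))) atTop (nhds 0) := by
      have := tendsto_one_div_add_atTop_nhds_zero_nat (𝕜 := ℝ)
      simpa using this.const_mul C
    have := h1.sqrt
    simpa using this
  exact tendsto_of_tendsto_of_tendsto_of_le_of_le tendsto_const_nhds htop hlower hupper
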